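/- arXiv:2101.09068 — 7 statements merged into one kernel-verified Lean document; each statement's English description precedes it below -/
import Mathlib

section
/- Let E be a smooth Banach space and define V : E × E* → ℝ by V(x, x*) = ‖x‖² − 2⟨x, x*⟩ + ‖x*‖². Then for all x ∈ E and x*, y* ∈ E*, V(x, x*) + 2⟨J⁻¹x* − x, y*⟩ ≤ V(x, x* + y*). -/
open NormedSpace

section DualPairing

variable {E : Type*} [SeminormedAddCommGroup E] [NormedSpace ℝ E]

lemma two_mul_apply_le_norm_sq_add_norm_sq (f : StrongDual ℝ E) (u : E) :
    2 * f u ≤ ‖f‖ ^ 2 + ‖u‖ ^ 2 := by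
  have hfu : f u ≤ ‖f‖ * ‖u‖ := (le_abs_self _).trans (f.le_opNorm u)
  nlinarith [sq_nonneg (‖f‖ - ‖u‖)]

/-- `u` is a subgradient of `½‖·‖²` at any `f` it is dual to, i.e. `u = J⁻¹ f`. -/
lemma norm_sq_add_two_mul_sub_apply_le_norm_sq {f : StrongDual ℝ E} {u : E}
    (hfu : f u = ‖u‖ ^ 2) (hf : ‖f‖ = ‖u‖) (g : StrongDual ℝ E) :
    ‖f‖ ^ 2 + 2 * (g - f) u ≤ ‖g‖ ^ 2 := by
  have := two_mul_apply_le_norm_sq_add_norm_sq g u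
  rw [sub_apply, hfu, hf]
  linarith

end DualPairing

theorem V_inequality_general
    {E : Type*} [NormedAddCommGroup E] [NormedSpace ℝ E]
    (J : E → StrongDual ℝ E) (Jinv : StrongDual ℝ E → E)
    (hJ : ∀ u, J u u = ‖u‖ ^ 2) (hJnorm : ∀ u, ‖J u‖ = ‖u‖)
    (hJinv : ∀ f, J (Jinv f) = f)
    (V : E → StrongDual ℝ E → ℝ) (hV : ∀ u f, V u f = ‖u‖ ^ 2 - 2 * f u + ‖f‖ ^ 2)
    (x : E) (xs ys : StrongDual ℝ E) :
    V x xs + 2 * ys (Jinv xs - x) ≤ V x (xs + ys) := by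
  have hdual : xs (Jinv xs) = ‖Jinv xs‖ ^ 2 := by rw [← hJ, hJinv]
  have hnorm : ‖xs‖ = ‖Jinv xs‖ := by rw [← hJnorm, hJinv]
  have key := norm_sq_add_two_mul_sub_apply_le_norm_sq hdual hnorm (xs + ys)
  rw [add_sub_cancel_left] at key
  rw [hV, hV, map_sub, add_apply]
  linarith

/-- In a reflexive, strictly convex, smooth Banach space with duality mapping `J`
(bijective with inverse `J⁻¹`), the functional `V(x, x*) = ‖x‖² − 2⟨x, x*⟩ + ‖x*‖²`
satisfies `V(x, x*) + 2⟨J⁻¹x* − x, y*⟩ ≤ V(x, x* + y*)` for all `x ∈ E`, `x*, y* ∈ E*`. -/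
theorem V_inequality
    {E : Type*} [NormedAddCommGroup E] [NormedSpace ℝ E] [CompleteSpace E]
    (J : E → StrongDual ℝ E) (Jinv : StrongDual ℝ E → E)
    (hJ : ∀ u, J u u = ‖u‖ ^ 2) (hJnorm : ∀ u, ‖J u‖ = ‖u‖)
    (hJinv : ∀ f, J (Jinv f) = f) (hinvJ : ∀ u, Jinv (J u) = u)
    (V : E → StrongDual ℝ E → ℝ) (hV : ∀ u f, V u f = ‖u‖ ^ 2 - 2 * f u + ‖f‖ ^ 2)
    (x : E) (xs ys : StrongDual ℝ E) :
    V x xs + 2 * ys (Jinv xs - x) ≤ V x (xs + ys) :=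
  V_inequality_general J Jinv hJ hJnorm hJinv V hV x xs ys
end

section
/- A Banach space E is 2-uniformly smooth if and only if there exists a constant κ > 0 such that for all x, y ∈ E, ‖x + y‖² ≤ ‖x‖² + 2⟨y, Jx⟩ + 2κ²‖y‖², where J is the normalized duality mapping. -/
open NormedSpace

/-- The modulus of smoothness of a normed space. -/
noncomputable def modSmooth (F : Type*) [NormedAddCommGroup F] (t : ℝ) : ℝ :=
  sSup {r : ℝ | ∃ x y : F, ‖x‖ = 1 ∧ ‖y‖ ≤ t ∧ r = (‖x + y‖ + ‖x - y‖) / 2 - 1}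

/-!
If `ρ(t) ≤ c t²`, then for a unit vector `x` with norming functional `j` the bound
`‖x + y‖ + ‖x - y‖ ≤ 2 + 2c‖y‖²` together with `‖x - y‖ ≥ j (x - y) = 1 - j y` gives
`‖x + y‖ ≤ 1 + j y + 2c‖y‖²`; squaring yields the inequality for unit `x`, and homogeneity
(with `J x = ‖x‖ • j`) gives it for all `x`.

Conversely, applying the inequality at `x + y` in direction `-2y`, and bounding the resulting
term `-j y = j x - ‖x + y‖²` by `‖x + y‖ ‖x‖ - ‖x + y‖²`, gives the Lindenstrauss-type bound
`‖x + y‖² + ‖x - y‖² ≤ 2‖x‖² + 4C‖y‖²`, from which `ρ(t) ≤ C t²` follows.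
-/

section modSmooth

variable {E : Type*} [NormedAddCommGroup E] {t : ℝ}

lemma le_modSmooth {x y : E} (hx : ‖x‖ = 1) (hy : ‖y‖ ≤ t) :
    (‖x + y‖ + ‖x - y‖) / 2 - 1 ≤ modSmooth E t := by
  refine le_csSup ⟨t, ?_⟩ ⟨x, y, hx, hy, rfl⟩
  rintro r ⟨u, v, hu, hv, rfl⟩
  linarith [norm_add_le u v, norm_sub_le u v]

lemma modSmooth_le {b : ℝ} (hb : 0 ≤ b)
    (h : ∀ x y : E, ‖x‖ = 1 → ‖y‖ ≤ t → (‖x + y‖ + ‖x - y‖) / 2 - 1 ≤ b) :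
    modSmooth E t ≤ b := by
  refine Real.sSup_le ?_ hb
  rintro r ⟨x, y, hx, hy, rfl⟩
  exact h x y hx hy

end modSmooth

section

variable {E : Type*} [NormedAddCommGroup E] [NormedSpace ℝ E]

lemma norm_add_le_of_modSmooth_le {c : ℝ}
    (hmod : ∀ t : ℝ, 0 ≤ t → modSmooth E t ≤ c * t ^ 2) {x : E} (hx : ‖x‖ = 1)
    {j : StrongDual ℝ E} (hj : ‖j‖ ≤ 1) (hjx : j x = 1) (y : E) :
    ‖x + y‖ ≤ 1 + j y + 2 * c * ‖y‖ ^ 2 := by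
  have hsum : (‖x + y‖ + ‖x - y‖) / 2 - 1 ≤ c * ‖y‖ ^ 2 :=
    (le_modSmooth hx le_rfl).trans (hmod _ (norm_nonneg y))
  have hsub : j (x - y) ≤ ‖x - y‖ :=
    (le_abs_self _).trans ((j.le_opNorm _).trans (mul_le_of_le_one_left (norm_nonneg _) hj))
  rw [map_sub, hjx] at hsub
  linarith

lemma norm_add_sq_le_of_modSmooth_le {c : ℝ} (hc : 0 ≤ c)
    (hmod : ∀ t : ℝ, 0 ≤ t → modSmooth E t ≤ c * t ^ 2) {x : E} (hx : ‖x‖ = 1)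
    {j : StrongDual ℝ E} (hj : ‖j‖ ≤ 1) (hjx : j x = 1) (y : E) :
    ‖x + y‖ ^ 2 ≤ 1 + 2 * j y + (5 + 8 * c + 4 * c ^ 2) * ‖y‖ ^ 2 := by
  have hjy : |j y| ≤ ‖y‖ := (j.le_opNorm y).trans (mul_le_of_le_one_left (norm_nonneg _) hj)
  obtain ⟨hjy_lower, hjy_upper⟩ := abs_le.mp hjy
  have hy0 := norm_nonneg y
  rcases le_or_gt ‖y‖ 1 with hsmall | hlarge
  · have h := norm_add_le_of_modSmooth_le hmod hx hj hjx y
    have hsq : ‖x + y‖ ^ 2 ≤ (1 + j y + 2 * c * ‖y‖ ^ 2) ^ 2 :=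
      pow_le_pow_left₀ (norm_nonneg _) h 2
    have hjy_sq : j y ^ 2 ≤ ‖y‖ ^ 2 := sq_le_sq' hjy_lower hjy_upper
    have hy_sq : ‖y‖ ^ 2 ≤ 1 := pow_le_one₀ hy0 hsmall
    nlinarith [mul_nonneg (mul_nonneg hc (sq_nonneg ‖y‖)) (sub_nonneg.mpr hsmall),
      mul_nonneg (mul_nonneg hc (sq_nonneg ‖y‖)) (sub_nonneg.mpr hjy_upper),
      mul_nonneg (mul_nonneg (mul_nonneg hc hc) (sq_nonneg ‖y‖)) (sub_nonneg.mpr hy_sq)]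
  · have h : ‖x + y‖ ≤ 1 + ‖y‖ := hx ▸ norm_add_le x y
    nlinarith [norm_nonneg (x + y)]

lemma exists_dual_norm_add_sq_le_of_unit {K : ℝ} (hK : 1 ≤ K)
    (h : ∀ u : E, ‖u‖ = 1 → ∀ j : StrongDual ℝ E, ‖j‖ = 1 → j u = 1 →
      ∀ y : E, ‖u + y‖ ^ 2 ≤ 1 + 2 * j y + K * ‖y‖ ^ 2) (x y : E) :
    ∃ jx : StrongDual ℝ E, jx x = ‖x‖ ^ 2 ∧ ‖jx‖ = ‖x‖ ∧
      ‖x + y‖ ^ 2 ≤ ‖x‖ ^ 2 + 2 * jx y + K * ‖y‖ ^ 2 := by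
  rcases eq_or_ne x 0 with rfl | hx
  · refine ⟨0, by simp, by simp, ?_⟩
    simp only [zero_add, norm_zero, zero_apply]
    nlinarith [sq_nonneg ‖y‖]
  obtain ⟨g, hg, hgx⟩ := exists_dual_vector ℝ x (norm_ne_zero_iff.mpr hx)
  set r := ‖x‖ with hr
  have hr0 : 0 < r := norm_pos_iff.mpr hx
  have hgx : g x = r := hgx
  refine ⟨r • g, by simp [hgx, sq], by rw [norm_smul, hg, Real.norm_of_nonneg hr0.le, mul_one],
    ?_⟩
  have hu : ‖r⁻¹ • x‖ = 1 := by
    rw [norm_smul, Real.norm_of_nonneg (inv_nonneg.mpr hr0.le), ← hr, inv_mul_cancel₀ hr0.ne']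
  have hgu : g (r⁻¹ • x) = 1 := by rw [map_smul, hgx, smul_eq_mul, inv_mul_cancel₀ hr0.ne']
  have hunit := h _ hu g hg hgu (r⁻¹ • y)
  have hxy : x + y = r • (r⁻¹ • x + r⁻¹ • y) := by
    rw [smul_add, smul_inv_smul₀ hr0.ne', smul_inv_smul₀ hr0.ne']
  calc ‖x + y‖ ^ 2 = r ^ 2 * ‖r⁻¹ • x + r⁻¹ • y‖ ^ 2 := by
        rw [hxy, norm_smul, Real.norm_of_nonneg hr0.le, mul_pow]
    _ ≤ r ^ 2 * (1 + 2 * g (r⁻¹ • y) + K * ‖r⁻¹ • y‖ ^ 2) :=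
        mul_le_mul_of_nonneg_left hunit (sq_nonneg r)
    _ = r ^ 2 + 2 * (r • g) y + K * ‖y‖ ^ 2 := by
        rw [map_smul, norm_smul, Real.norm_of_nonneg (inv_nonneg.mpr hr0.le)]
        simp only [smul_eq_mul, smul_apply]
        field_simp

lemma norm_add_sq_add_norm_sub_sq_le {C : ℝ}
    (h : ∀ x y : E, ∃ jx : StrongDual ℝ E, jx x = ‖x‖ ^ 2 ∧ ‖jx‖ = ‖x‖ ∧
      ‖x + y‖ ^ 2 ≤ ‖x‖ ^ 2 + 2 * jx y + C * ‖y‖ ^ 2) (x y : E) :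
    ‖x + y‖ ^ 2 + ‖x - y‖ ^ 2 ≤ 2 * ‖x‖ ^ 2 + 4 * C * ‖y‖ ^ 2 := by
  obtain ⟨j, hj_self, hj_norm, hj⟩ := h (x + y) ((-2 : ℝ) • y)
  rw [show x + y + (-2 : ℝ) • y = x - y by module, norm_smul, map_smul, smul_eq_mul,
    show ‖(-2 : ℝ)‖ = 2 by norm_num] at hj
  have hjx : j x ≤ ‖x + y‖ * ‖x‖ := hj_norm ▸ (le_abs_self _).trans (j.le_opNorm x)
  rw [map_add] at hj_self
  nlinarith [sq_nonneg (‖x + y‖ - ‖x‖)]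

lemma modSmooth_le_of_norm_add_sq_le {C : ℝ} (hC : 0 ≤ C)
    (h : ∀ x y : E, ∃ jx : StrongDual ℝ E, jx x = ‖x‖ ^ 2 ∧ ‖jx‖ = ‖x‖ ∧
      ‖x + y‖ ^ 2 ≤ ‖x‖ ^ 2 + 2 * jx y + C * ‖y‖ ^ 2) (t : ℝ) :
    modSmooth E t ≤ C * t ^ 2 := by
  refine modSmooth_le (by positivity) fun x y hx hy => ?_
  have hpar := norm_add_sq_add_norm_sub_sq_le h x y
  rw [hx] at hpar
  have hyt : ‖y‖ ^ 2 ≤ t ^ 2 := pow_le_pow_left₀ (norm_nonneg y) hy 2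
  have hsum : (‖x + y‖ + ‖x - y‖) ^ 2 ≤ (2 + 2 * C * t ^ 2) ^ 2 := by
    nlinarith [sq_nonneg (‖x + y‖ - ‖x - y‖), mul_le_mul_of_nonneg_left hyt hC,
      mul_nonneg hC (sq_nonneg t)]
  linarith [le_of_sq_le_sq hsum (by positivity)]

end

theorem two_uniformly_smooth_iff_general
    {E : Type*} [NormedAddCommGroup E] [NormedSpace ℝ E] :
    (∃ c > 0, ∀ t : ℝ, 0 ≤ t → modSmooth E t ≤ c * t ^ 2) ↔
      (∃ κ > 0, ∀ x y : E, ∃ jx : StrongDual ℝ E, jx x = ‖x‖ ^ 2 ∧ ‖jx‖ = ‖x‖ ∧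
        ‖x + y‖ ^ 2 ≤ ‖x‖ ^ 2 + 2 * jx y + 2 * κ ^ 2 * ‖y‖ ^ 2) := by
  constructor
  · rintro ⟨c, hc, hmod⟩
    have hK : 0 < (5 + 8 * c + 4 * c ^ 2) / 2 := by positivity
    refine ⟨√((5 + 8 * c + 4 * c ^ 2) / 2), Real.sqrt_pos.mpr hK, ?_⟩
    rw [Real.sq_sqrt hK.le, mul_div_cancel₀ _ two_ne_zero]
    exact exists_dual_norm_add_sq_le_of_unit (by nlinarith)
      fun u hu j hj hju => norm_add_sq_le_of_modSmooth_le hc.le hmod hu hj.le hju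
  · rintro ⟨κ, hκ, h⟩
    exact ⟨2 * κ ^ 2, by positivity, fun t _ => modSmooth_le_of_norm_add_sq_le (by positivity) h t⟩

/-- A Banach space `E` is 2-uniformly smooth iff there is `κ > 0` with
`‖x + y‖² ≤ ‖x‖² + 2⟨y, jx⟩ + 2κ²‖y‖²` for all `x, y` and some selection `jx` of the
normalized duality mapping at `x`. -/
theorem two_uniformly_smooth_iff
    {E : Type*} [NormedAddCommGroup E] [NormedSpace ℝ E] [CompleteSpace E] :
    (∃ c > 0, ∀ t : ℝ, 0 ≤ t → modSmooth E t ≤ c * t ^ 2) ↔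
      (∃ κ > 0, ∀ x y : E, ∃ jx : StrongDual ℝ E, jx x = ‖x‖ ^ 2 ∧ ‖jx‖ = ‖x‖ ∧
        ‖x + y‖ ^ 2 ≤ ‖x‖ ^ 2 + 2 * jx y + 2 * κ ^ 2 * ‖y‖ ^ 2) :=
  two_uniformly_smooth_iff_general
end

section
/- Let g : E → ℝ be convex and Gâteaux-differentiable with gradient ∇g : E → E* Lipschitz continuous with constant L. Then ∇g satisfies the co-coercivity inequality ⟨∇g(x) − ∇g(y), x − y⟩ ≥ (1/L)‖∇g(x) − ∇g(y)‖² for all x, y ∈ E; in particular ∇g is monotone. -/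
/-!
Two inequalities pin down a convex function with `L`-Lipschitz gradient: it lies above its tangent
planes, `g x + ∇g(x)(y - x) ≤ g y`, and below the tangent parabolas,
`g (y + w) ≤ g y + ∇g(y) w + L ‖w‖² / 2`. Chaining them through `y + w` gives
`(∇g(x) - ∇g(y)) w ≤ D + L ‖w‖² / 2` for every `w`, where `D = g y - g x - ∇g(x)(y - x)`, and
optimizing in `w` yields `‖∇g(x) - ∇g(y)‖² ≤ 2 L D`. Adding this to the same bound with `x` and `y`
exchanged cancels the values of `g` and leaves co-coercivity.
-/

open Set

theorem HasLineDerivAt.hasDerivAt_add_smul {𝕜 F E : Type*} [NontriviallyNormedField 𝕜]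
    [NormedAddCommGroup F] [NormedSpace 𝕜 F] [AddCommGroup E] [Module 𝕜 E]
    {f : E → F} {f' : F} {x v : E} {t₀ : 𝕜} (h : HasLineDerivAt 𝕜 f f' (x + t₀ • v) v) :
    HasDerivAt (fun t : 𝕜 => f (x + t • v)) f' t₀ := by
  have h' : HasDerivAt (fun s : 𝕜 => f (x + t₀ • v + s • v)) f' (t₀ - t₀) := by
    rw [sub_self]
    exact h
  convert h'.comp_sub_const t₀ t₀ using 3 with t
  module

theorem ConvexOn.add_le_of_hasLineDerivAt {E : Type*} [AddCommGroup E] [Module ℝ E]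
    {f : E → ℝ} {f' : ℝ} {x v : E} (hf : ConvexOn ℝ univ f) (h : HasLineDerivAt ℝ f f' x v) :
    f x + f' ≤ f (x + v) := by
  have hline : (fun t : ℝ => f (x + t • v)) = f ∘ AffineMap.lineMap x (x + v) := by
    ext t
    simp only [Function.comp_apply, AffineMap.lineMap_apply_module']
    congr 1
    module
  have hconv : ConvexOn ℝ univ (fun t : ℝ => f (x + t • v)) :=
    hline ▸ hf.comp_affineMap (AffineMap.lineMap x (x + v))
  have := hconv.le_slope_of_hasDerivAt (mem_univ 0) (mem_univ 1) zero_lt_one h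
  simp only [slope_def_field, one_smul, zero_smul, add_zero, sub_zero, div_one] at this
  linarith

theorem le_add_deriv_add_of_deriv_sub_le {φ φ' : ℝ → ℝ} {K : ℝ}
    (hφ : ∀ t, HasDerivAt φ (φ' t) t) (hφ' : ∀ t ∈ Ioo (0 : ℝ) 1, φ' t - φ' 0 ≤ K * t) :
    φ 1 ≤ φ 0 + φ' 0 + K / 2 := by
  set ψ : ℝ → ℝ := fun t => φ t - t * φ' 0 - K / 2 * t ^ 2
  have hψ (t : ℝ) : HasDerivAt ψ (φ' t - φ' 0 - K * t) t :=
    (((hφ t).sub ((hasDerivAt_id' t).mul_const (φ' 0))).sub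
      ((hasDerivAt_pow 2 t).const_mul (K / 2))).congr_deriv (by norm_num; ring)
  have hanti : AntitoneOn ψ (Icc 0 1) := by
    refine antitoneOn_of_hasDerivWithinAt_nonpos (convex_Icc 0 1)
      (fun t _ => (hψ t).continuousAt.continuousWithinAt) (fun t _ => (hψ t).hasDerivWithinAt) ?_
    rw [interior_Icc]
    intro t ht
    linarith [hφ' t ht]
  have := hanti (left_mem_Icc.2 zero_le_one) (right_mem_Icc.2 zero_le_one) zero_le_one
  simp only [ψ] at this
  linarith

section Gradient

variable {E : Type*} [NormedAddCommGroup E] [NormedSpace ℝ E]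
  {g : E → ℝ} {g' : E → StrongDual ℝ E} {L : ℝ}

theorem le_add_apply_add_of_lipschitz_gradient (hg : ∀ x v, HasLineDerivAt ℝ g (g' x v) x v)
    (hLip : ∀ x y, ‖g' x - g' y‖ ≤ L * ‖x - y‖) (x v : E) :
    g (x + v) ≤ g x + g' x v + L * ‖v‖ ^ 2 / 2 := by
  have hφ (t : ℝ) : HasDerivAt (fun t : ℝ => g (x + t • v)) (g' (x + t • v) v) t :=
    (hg _ v).hasDerivAt_add_smul
  have hbound (t : ℝ) (ht : t ∈ Ioo (0 : ℝ) 1) :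
      g' (x + t • v) v - g' (x + (0 : ℝ) • v) v ≤ L * ‖v‖ ^ 2 * t := by
    calc g' (x + t • v) v - g' (x + (0 : ℝ) • v) v = (g' (x + t • v) - g' x) v := by simp
      _ ≤ ‖g' (x + t • v) - g' x‖ * ‖v‖ := (le_abs_self _).trans ((g' _ - g' x).le_opNorm v)
      _ ≤ L * (t * ‖v‖) * ‖v‖ := by
        gcongr
        simpa [norm_smul, abs_of_pos ht.1] using hLip (x + t • v) x
      _ = L * ‖v‖ ^ 2 * t := by ring
  simpa [mul_div_assoc] using le_add_deriv_add_of_deriv_sub_le hφ hbound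

theorem opNorm_sq_le_of_apply_le_add_sq {ℓ : StrongDual ℝ E} {a b : ℝ} (ha : 0 < a)
    (h : ∀ w, ℓ w ≤ b + a / 2 * ‖w‖ ^ 2) : ‖ℓ‖ ^ 2 ≤ 2 * a * b := by
  have hb : 0 ≤ b := by simpa using h 0
  have happly (v : E) : ℓ v ^ 2 ≤ 2 * a * b * ‖v‖ ^ 2 := by
    rcases eq_or_ne ‖v‖ 0 with hv | hv
    · simp [norm_eq_zero.1 hv]
    have hs : 0 < a * ‖v‖ ^ 2 := by positivity
    -- the minimizer of `t ↦ b + a / 2 * t ^ 2 * ‖v‖ ^ 2 - t * ℓ v`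
    have := h ((ℓ v / (a * ‖v‖ ^ 2)) • v)
    rw [map_smul, smul_eq_mul, norm_smul, Real.norm_eq_abs, mul_pow, sq_abs] at this
    field_simp at this
    nlinarith
  have hnorm : ‖ℓ‖ ≤ √(2 * a * b) := ℓ.opNorm_le_bound (Real.sqrt_nonneg _) fun v => by
    rw [Real.norm_eq_abs, ← Real.sqrt_sq (norm_nonneg v), ← Real.sqrt_mul (by positivity)]
    exact Real.abs_le_sqrt (happly v)
  calc ‖ℓ‖ ^ 2 ≤ √(2 * a * b) ^ 2 := by gcongr
    _ = 2 * a * b := Real.sq_sqrt (by positivity)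

theorem sq_norm_sub_le_of_lipschitz_gradient (hconv : ConvexOn ℝ univ g)
    (hg : ∀ x v, HasLineDerivAt ℝ g (g' x v) x v) (hL : 0 < L)
    (hLip : ∀ x y, ‖g' x - g' y‖ ≤ L * ‖x - y‖) (x y : E) :
    ‖g' x - g' y‖ ^ 2 ≤ 2 * L * (g y - g x - g' x (y - x)) := by
  refine opNorm_sq_le_of_apply_le_add_sq hL fun w => ?_
  have hdescent := le_add_apply_add_of_lipschitz_gradient hg hLip y w
  have hsupport := hconv.add_le_of_hasLineDerivAt (hg x (y + w - x))
  rw [add_sub_cancel, map_sub, map_add] at hsupport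
  rw [sub_apply, map_sub]
  linarith

end Gradient

theorem gradient_cocoercive_general
    {E : Type*} [NormedAddCommGroup E] [NormedSpace ℝ E]
    (g : E → ℝ) (g' : E → StrongDual ℝ E)
    (hgconv : ConvexOn ℝ Set.univ g)
    (hgdiff : ∀ x v : E, HasDerivAt (fun t : ℝ => g (x + t • v)) (g' x v) 0)
    (L : ℝ) (hL : 0 < L)
    (hLip : ∀ x y, ‖g' x - g' y‖ ≤ L * ‖x - y‖) :
    ∀ x y : E, (1 / L) * ‖g' x - g' y‖ ^ 2 ≤ (g' x - g' y) (x - y) ∧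
      0 ≤ (g' x - g' y) (x - y) := by
  intro x y
  have hxy := sq_norm_sub_le_of_lipschitz_gradient hgconv hgdiff hL hLip x y
  have hyx := sq_norm_sub_le_of_lipschitz_gradient hgconv hgdiff hL hLip y x
  rw [norm_sub_rev] at hyx
  have hpair : (g' x - g' y) (x - y) = -g' x (y - x) - g' y (x - y) := by
    simp only [sub_apply, map_sub]
    ring
  have hcocoercive : 1 / L * ‖g' x - g' y‖ ^ 2 ≤ (g' x - g' y) (x - y) := by
    rw [one_div_mul_eq_div, div_le_iff₀ hL, hpair]
    linarith
  exact ⟨hcocoercive, le_trans (by positivity) hcocoercive⟩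

/-- If `g : E → ℝ` is convex and Gâteaux differentiable with `L`-Lipschitz
gradient `∇g : E → E*`, then `⟨∇g(x) − ∇g(y), x − y⟩ ≥ (1/L)‖∇g(x) − ∇g(y)‖²`
(co-coercivity); in particular `∇g` is monotone. -/
theorem gradient_cocoercive
    {E : Type*} [NormedAddCommGroup E] [NormedSpace ℝ E] [CompleteSpace E]
    (g : E → ℝ) (g' : E → StrongDual ℝ E)
    (hgconv : ConvexOn ℝ Set.univ g)
    (hgdiff : ∀ x v : E, HasDerivAt (fun t : ℝ => g (x + t • v)) (g' x v) 0)
    (L : ℝ) (hL : 0 < L)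
    (hLip : ∀ x y, ‖g' x - g' y‖ ≤ L * ‖x - y‖) :
    ∀ x y : E, (1 / L) * ‖g' x - g' y‖ ^ 2 ≤ (g' x - g' y) (x - y) ∧
      0 ≤ (g' x - g' y) (x - y) :=
  gradient_cocoercive_general g g' hgconv hgdiff L hL hLip
end

section
/- In the setting of Tseng's algorithm in a 2-uniformly convex, uniformly smooth Banach space, the one-step estimate holds: if x* ∈ (A+B)⁻¹(0), y = J_λ^B(J⁻¹(Jx − λAx)) and x⁺ = J⁻¹(Jy − λ(Ay − Ax)), then φ(x*, x⁺) ≤ φ(x*, x) − (1 − 2κ²λ²L²μ)·φ(y, x), where κ is the 2-uniform smoothness constant of E*, μ the constant from (1/μ)‖u−v‖² ≤ φ(u,v), and L the Lipschitz constant of A. -/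
open NormedSpace

/-!
The proof is the usual Lyapunov argument for forward–backward–forward splitting. The
2-uniform smoothness of `E*` bounds `φ(x*, x⁺)` by `φ(x*, y)` plus a correction term linear in
`λ(Ay − Ax)` and a quadratic error `2κ²λ²‖Ay − Ax‖²`. The three-point identity for `φ` turns
`φ(x*, y)` into `φ(x*, x) − φ(y, x)` plus a term coming from `Jx − Jy = λ(Ax + b)`; together with
the linear correction it becomes `2λ⟨x* − y, Ay + b⟩`, which is nonpositive by monotonicity of
`A + B` at the zero `x*`. Finally Lipschitz continuity and 2-uniform convexity give
`‖Ay − Ax‖² ≤ L²μ φ(y, x)`.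
-/

section Lyapunov

variable {E : Type*} [NormedAddCommGroup E] [NormedSpace ℝ E]

def lyapunovFunctional (J : E → StrongDual ℝ E) (u v : E) : ℝ :=
  ‖u‖ ^ 2 - 2 * J v u + ‖v‖ ^ 2

variable (J : E → StrongDual ℝ E)

theorem lyapunovFunctional_three_point {x y z : E} (hJy : J y y = ‖y‖ ^ 2) :
    lyapunovFunctional J z y =
      lyapunovFunctional J z x - lyapunovFunctional J y x + 2 * (J x - J y) (z - y) := by
  simp only [lyapunovFunctional, sub_apply, map_sub]
  linear_combination (-2 : ℝ) * hJy

theorem lyapunovFunctional_le_of_uniformlySmooth {κ : ℝ}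
    (hJnorm : ∀ u, ‖J u‖ = ‖u‖)
    (hsmooth : ∀ (u : E) (g : StrongDual ℝ E),
      ‖J u + g‖ ^ 2 ≤ ‖J u‖ ^ 2 + 2 * g u + 2 * κ ^ 2 * ‖g‖ ^ 2)
    {y w z : E} {g : StrongDual ℝ E} (hw : J w = J y + g) :
    lyapunovFunctional J z w ≤
      lyapunovFunctional J z y - 2 * g (z - y) + 2 * κ ^ 2 * ‖g‖ ^ 2 := by
  have hnorm : ‖w‖ ^ 2 ≤ ‖y‖ ^ 2 + 2 * g y + 2 * κ ^ 2 * ‖g‖ ^ 2 := by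
    simpa only [← hw, hJnorm] using hsmooth y g
  simp only [lyapunovFunctional, hw, add_apply, map_sub]
  linarith

theorem norm_sub_sq_le_mul_lyapunovFunctional {μ : ℝ} (hμ : 0 < μ)
    (hconv : ∀ u v : E, (1 / μ) * ‖u - v‖ ^ 2 ≤ lyapunovFunctional J u v) (u v : E) :
    ‖u - v‖ ^ 2 ≤ μ * lyapunovFunctional J u v := by
  have h := hconv u v
  rw [one_div, inv_mul_le_iff₀ hμ] at h
  exact h

end Lyapunov

section Monotone

variable {E : Type*} [NormedAddCommGroup E] [NormedSpace ℝ E]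
  {A : E → StrongDual ℝ E} {B : E → Set (StrongDual ℝ E)}

theorem apply_sub_nonneg_of_add_eq_zero
    (hAmono : ∀ u v, 0 ≤ (A u - A v) (u - v))
    (hBmono : ∀ u v, ∀ us ∈ B u, ∀ vs ∈ B v, 0 ≤ (us - vs) (u - v))
    {xs y : E} {bs b : StrongDual ℝ E} (hbs : bs ∈ B xs) (hzero : A xs + bs = 0)
    (hb : b ∈ B y) :
    0 ≤ (A y + b) (y - xs) := by
  have hsum : A y + b = (A y - A xs) + (b - bs) := by
    rw [← sub_zero (A y + b), ← hzero]; abel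
  rw [hsum, add_apply]
  exact add_nonneg (hAmono y xs) (hBmono y xs b hb bs hbs)

end Monotone

theorem tseng_one_step_estimate_general
    {E : Type*} [NormedAddCommGroup E] [NormedSpace ℝ E]
    (J : E → StrongDual ℝ E) (Jinv : StrongDual ℝ E → E)
    (hJ : ∀ u, J u u = ‖u‖ ^ 2) (hJnorm : ∀ u, ‖J u‖ = ‖u‖)
    (hJinv : ∀ f, J (Jinv f) = f)
    (φ : E → E → ℝ) (hφ : ∀ u v, φ u v = ‖u‖ ^ 2 - 2 * J v u + ‖v‖ ^ 2)
    (κ μ L lam : ℝ) (hμ : 1 ≤ μ) (hlam : 0 < lam)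
    -- 2-uniform smoothness inequality in the dual `E*`
    (hsmooth : ∀ (u : E) (g : StrongDual ℝ E),
      ‖J u + g‖ ^ 2 ≤ ‖J u‖ ^ 2 + 2 * g u + 2 * κ ^ 2 * ‖g‖ ^ 2)
    -- 2-uniform convexity of `E`
    (hconv : ∀ u v : E, (1 / μ) * ‖u - v‖ ^ 2 ≤ φ u v)
    (A : E → StrongDual ℝ E) (B : E → Set (StrongDual ℝ E))
    (hAmono : ∀ u v, 0 ≤ (A u - A v) (u - v))
    (hALip : ∀ u v, ‖A u - A v‖ ≤ L * ‖u - v‖)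
    (hBmono : ∀ u v, ∀ us ∈ B u, ∀ vs ∈ B v, 0 ≤ (us - vs) (u - v))
    (x y xs xp : E)
    (hxs : ∃ b ∈ B xs, A xs + b = 0)
    (hy : ∃ b ∈ B y, J x - lam • A x = J y + lam • b)
    (hxp : xp = Jinv (J y - lam • (A y - A x))) :
    φ xs xp ≤ φ xs x - (1 - 2 * κ ^ 2 * lam ^ 2 * L ^ 2 * μ) * φ y x := by
  obtain rfl : φ = lyapunovFunctional J := funext₂ hφ
  obtain ⟨bs, hbs, hzero⟩ := hxs
  obtain ⟨b, hb, hresolvent⟩ := hy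
  have hJxp : J xp = J y + -(lam • (A y - A x)) := by rw [hxp, hJinv, sub_eq_add_neg]
  have hJx : J x - J y = lam • (A x + b) := by
    rw [sub_eq_iff_eq_add.mp hresolvent, smul_add]; abel
  have hsmooth_step := lyapunovFunctional_le_of_uniformlySmooth J hJnorm hsmooth (z := xs) hJxp
  have hthree := lyapunovFunctional_three_point J (x := x) (z := xs) (hJ y)
  have hmono := mul_nonneg hlam.le (apply_sub_nonneg_of_add_eq_zero hAmono hBmono hbs hzero hb)
  have hLip : ‖A y - A x‖ ^ 2 ≤ L ^ 2 * μ * lyapunovFunctional J y x := by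
    calc ‖A y - A x‖ ^ 2 ≤ (L * ‖y - x‖) ^ 2 := by gcongr; exact hALip y x
      _ ≤ L ^ 2 * (μ * lyapunovFunctional J y x) := by
        rw [mul_pow]; gcongr
        exact norm_sub_sq_le_mul_lyapunovFunctional J (by linarith) hconv y x
      _ = _ := by ring
  have herror : 2 * κ ^ 2 * ‖-(lam • (A y - A x))‖ ^ 2 ≤
      2 * κ ^ 2 * lam ^ 2 * (L ^ 2 * μ * lyapunovFunctional J y x) := by
    rw [norm_neg, norm_smul, mul_pow, Real.norm_eq_abs, sq_abs, ← mul_assoc]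
    gcongr
  simp only [hJx, neg_apply, smul_apply, sub_apply, add_apply, smul_eq_mul, map_sub]
    at hsmooth_step hthree hmono
  linarith

/-- One-step estimate for Tseng's algorithm in a 2-uniformly convex,
uniformly smooth Banach space: if `0 ∈ (A+B)x*`, `y = J_λ^B (J⁻¹(Jx − λAx))` and
`x⁺ = J⁻¹(Jy − λ(Ay − Ax))`, then
`φ(x*, x⁺) ≤ φ(x*, x) − (1 − 2κ²λ²L²μ) φ(y, x)`. -/
theorem tseng_one_step_estimate
    {E : Type*} [NormedAddCommGroup E] [NormedSpace ℝ E] [CompleteSpace E]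
    (J : E → StrongDual ℝ E) (Jinv : StrongDual ℝ E → E)
    (hJ : ∀ u, J u u = ‖u‖ ^ 2) (hJnorm : ∀ u, ‖J u‖ = ‖u‖)
    (hJinv : ∀ f, J (Jinv f) = f) (hinvJ : ∀ u, Jinv (J u) = u)
    (φ : E → E → ℝ) (hφ : ∀ u v, φ u v = ‖u‖ ^ 2 - 2 * J v u + ‖v‖ ^ 2)
    (κ μ L lam : ℝ) (hκ : 0 < κ) (hμ : 1 ≤ μ) (hL : 0 < L) (hlam : 0 < lam)
    -- 2-uniform smoothness inequality in the dual `E*`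
    (hsmooth : ∀ (u : E) (g : StrongDual ℝ E),
      ‖J u + g‖ ^ 2 ≤ ‖J u‖ ^ 2 + 2 * g u + 2 * κ ^ 2 * ‖g‖ ^ 2)
    -- 2-uniform convexity of `E`
    (hconv : ∀ u v : E, (1 / μ) * ‖u - v‖ ^ 2 ≤ φ u v)
    (A : E → StrongDual ℝ E) (B : E → Set (StrongDual ℝ E))
    (hAmono : ∀ u v, 0 ≤ (A u - A v) (u - v))
    (hALip : ∀ u v, ‖A u - A v‖ ≤ L * ‖u - v‖)
    (hBmono : ∀ u v, ∀ us ∈ B u, ∀ vs ∈ B v, 0 ≤ (us - vs) (u - v))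
    (x y xs xp : E)
    (hxs : ∃ b ∈ B xs, A xs + b = 0)
    (hy : ∃ b ∈ B y, J x - lam • A x = J y + lam • b)
    (hxp : xp = Jinv (J y - lam • (A y - A x))) :
    φ xs xp ≤ φ xs x - (1 - 2 * κ ^ 2 * lam ^ 2 * L ^ 2 * μ) * φ y x :=
  tseng_one_step_estimate_general J Jinv hJ hJnorm hJinv φ hφ κ μ L lam hμ hlam hsmooth hconv A B
    hAmono hALip hBmono x y xs xp hxs hy hxp
end

section
/- In Tseng's algorithm with constant step-size bounds 0 < a ≤ λ_n ≤ b < 1/(√(2μ)κL), the sequence generated by x_{n+1} = J⁻¹(Jy_n − λ_n(Ay_n − Ax_n)) with y_n = J_{λ_n}^B(J⁻¹(Jx_n − λ_nAx_n)) satisfies the rate estimate min_{1≤k≤n} ‖x_k − y_k‖² ≤ μ·φ(x*, x_1) / (n(1 − 2κ²b²L²μ)) for any zero x* of A+B; in particular min_{1≤k≤n}‖x_k − y_k‖ = O(1/√n). -/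
open NormedSpace

/-! Tseng's scheme makes the Lyapunov functional `φ(x*, ·)` decrease along the iterates by at least
`(1/μ - 2κ²b²L²) ‖xₙ - yₙ‖²`: the resolvent step is a three-point identity for `φ` whose cross term
is nonpositive by monotonicity of `A + B` at its zero `x*`, and the forward correction step costs,
by 2-uniform smoothness of `E*` and the Lipschitz bound on `A`, at most `2κ²λ²L² ‖xₙ - yₙ‖²`.
Summing the descent inequality telescopes, so the smallest of the first `n` residuals is at most
the average, `φ(x*, x₁) / (n (1/μ - 2κ²b²L²))`. -/

section Tseng

variable {E : Type*} [NormedAddCommGroup E] [NormedSpace ℝ E]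

def lyapunov (J : E → StrongDual ℝ E) (u v : E) : ℝ := ‖u‖ ^ 2 - 2 * J v u + ‖v‖ ^ 2

variable {J A : E → StrongDual ℝ E} {B : E → Set (StrongDual ℝ E)} {κ : ℝ}

theorem lyapunov_three_point {x y : E} (hJy : J y y = ‖y‖ ^ 2) (z : E) :
    lyapunov J z y = lyapunov J z x - lyapunov J y x + 2 * (J x - J y) (z - y) := by
  simp only [lyapunov, sub_apply, map_sub]
  linarith

theorem lyapunov_le_of_eq_add
    (hsmooth : ∀ (u : E) (g : StrongDual ℝ E),
      ‖J u + g‖ ^ 2 ≤ ‖J u‖ ^ 2 + 2 * g u + 2 * κ ^ 2 * ‖g‖ ^ 2)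
    (hJnorm : ∀ u, ‖J u‖ = ‖u‖) {y w : E} {g : StrongDual ℝ E} (hw : J w = J y + g) (z : E) :
    lyapunov J z w ≤ lyapunov J z y - 2 * g (z - y) + 2 * κ ^ 2 * ‖g‖ ^ 2 := by
  have h := hsmooth y g
  rw [← hw, hJnorm, hJnorm] at h
  simp only [lyapunov, hw, add_apply, map_sub]
  linarith

theorem lyapunov_nonneg {μ : ℝ} (hμ : 0 < μ)
    (hconv : ∀ u v : E, (1 / μ) * ‖u - v‖ ^ 2 ≤ lyapunov J u v) (u v : E) :
    0 ≤ lyapunov J u v :=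
  (by positivity : 0 ≤ (1 / μ) * ‖u - v‖ ^ 2).trans (hconv u v)

theorem apply_sub_nonneg_of_zero_mem
    (hAmono : ∀ u v, 0 ≤ (A u - A v) (u - v))
    (hBmono : ∀ u v, ∀ us ∈ B u, ∀ vs ∈ B v, 0 ≤ (us - vs) (u - v))
    {y z : E} {b c : StrongDual ℝ E} (hb : b ∈ B y) (hc : c ∈ B z) (hz : A z + c = 0) :
    0 ≤ (A y + b) (y - z) := by
  have hA := hAmono y z
  have hB := hBmono y z b hb c hc
  have hz' : (A z + c) (y - z) = 0 := by rw [hz, zero_apply]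
  simp only [sub_apply, add_apply] at hA hB hz' ⊢
  linarith

/-- `hres` and `hnext` encode one step of Tseng's scheme, `y = J_λ^B J⁻¹(Jx - λAx)` and
`x' = J⁻¹(Jy - λ(Ay - Ax))`. -/
theorem tseng_lyapunov_le
    (hJ : ∀ u, J u u = ‖u‖ ^ 2) (hJnorm : ∀ u, ‖J u‖ = ‖u‖)
    (hsmooth : ∀ (u : E) (g : StrongDual ℝ E),
      ‖J u + g‖ ^ 2 ≤ ‖J u‖ ^ 2 + 2 * g u + 2 * κ ^ 2 * ‖g‖ ^ 2)
    (hAmono : ∀ u v, 0 ≤ (A u - A v) (u - v))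
    (hBmono : ∀ u v, ∀ us ∈ B u, ∀ vs ∈ B v, 0 ≤ (us - vs) (u - v))
    {lam : ℝ} (hlam : 0 ≤ lam) {x y x' z : E} {b c : StrongDual ℝ E}
    (hb : b ∈ B y) (hres : J x - lam • A x = J y + lam • b)
    (hnext : J x' = J y - lam • (A y - A x)) (hc : c ∈ B z) (hz : A z + c = 0) :
    lyapunov J z x' ≤ lyapunov J z x - lyapunov J y x + 2 * κ ^ 2 * lam ^ 2 * ‖A y - A x‖ ^ 2 := by
  have hforward := lyapunov_le_of_eq_add hsmooth hJnorm (y := y) (w := x')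
    (g := -(lam • (A y - A x))) (by rw [hnext]; abel) z
  have hthree := lyapunov_three_point (x := x) (hJ y) z
  have hJxy : J x - J y = lam • (A x + b) := by
    rw [← sub_eq_zero] at hres ⊢
    convert hres using 1
    rw [smul_add]; abel
  have hmono := mul_nonneg hlam (apply_sub_nonneg_of_zero_mem hAmono hBmono hb hc hz)
  have hcross : 2 * (J x - J y) (z - y) - 2 * (-(lam • (A y - A x))) (z - y)
      = -2 * (lam * (A y + b) (y - z)) := by
    rw [hJxy]
    simp only [neg_apply, smul_apply, add_apply, sub_apply, map_sub, smul_eq_mul]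
    ring
  rw [norm_neg, norm_smul, Real.norm_of_nonneg hlam, mul_pow] at hforward
  linarith

theorem tseng_lyapunov_descent
    (hJ : ∀ u, J u u = ‖u‖ ^ 2) (hJnorm : ∀ u, ‖J u‖ = ‖u‖)
    (hsmooth : ∀ (u : E) (g : StrongDual ℝ E),
      ‖J u + g‖ ^ 2 ≤ ‖J u‖ ^ 2 + 2 * g u + 2 * κ ^ 2 * ‖g‖ ^ 2)
    {μ L s : ℝ} (hconv : ∀ u v : E, (1 / μ) * ‖u - v‖ ^ 2 ≤ lyapunov J u v)
    (hAmono : ∀ u v, 0 ≤ (A u - A v) (u - v)) (hALip : ∀ u v, ‖A u - A v‖ ≤ L * ‖u - v‖)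
    (hBmono : ∀ u v, ∀ us ∈ B u, ∀ vs ∈ B v, 0 ≤ (us - vs) (u - v))
    {lam : ℝ} (hlam : 0 ≤ lam) (hlams : lam ≤ s) {x y x' z : E} {b c : StrongDual ℝ E}
    (hb : b ∈ B y) (hres : J x - lam • A x = J y + lam • b)
    (hnext : J x' = J y - lam • (A y - A x)) (hc : c ∈ B z) (hz : A z + c = 0) :
    lyapunov J z x' + (1 / μ - 2 * κ ^ 2 * s ^ 2 * L ^ 2) * ‖x - y‖ ^ 2 ≤ lyapunov J z x := by
  have hstep := tseng_lyapunov_le hJ hJnorm hsmooth hAmono hBmono hlam hb hres hnext hc hz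
  have hyx := hconv y x
  have hlam_sq : lam ^ 2 ≤ s ^ 2 := pow_le_pow_left₀ hlam hlams 2
  have hA_sq : ‖A y - A x‖ ^ 2 ≤ L ^ 2 * ‖x - y‖ ^ 2 := by
    rw [← mul_pow, norm_sub_rev x]
    exact pow_le_pow_left₀ (norm_nonneg _) (hALip y x) 2
  have hcorr : κ ^ 2 * lam ^ 2 * ‖A y - A x‖ ^ 2 ≤ κ ^ 2 * s ^ 2 * (L ^ 2 * ‖x - y‖ ^ 2) := by
    gcongr
  rw [norm_sub_rev] at hyx
  linarith

end Tseng

theorem exists_mem_Icc_mul_le_of_descent {u e : ℕ → ℝ} {D : ℝ} (hD : 0 ≤ D)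
    (hu : ∀ n, 0 ≤ u n) (hstep : ∀ n, u (n + 1) + D * e n ≤ u n) {n : ℕ} (hn : 1 ≤ n) :
    ∃ k ∈ Finset.Icc 1 n, n * D * e k ≤ u 1 := by
  have htelescope : ∀ m, u (m + 1) + D * ∑ k ∈ Finset.Icc 1 m, e k ≤ u 1 := by
    intro m
    induction m with
    | zero => simp
    | succ m ih =>
      rw [Finset.sum_Icc_succ_top (by omega), mul_add]
      linarith [hstep (m + 1)]
  obtain ⟨k, hk, hmin⟩ := Finset.exists_min_image (Finset.Icc 1 n) e ⟨1, by simp [hn]⟩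
  have hsum : n * e k ≤ ∑ j ∈ Finset.Icc 1 n, e j := by
    simpa using Finset.card_nsmul_le_sum _ _ _ hmin
  refine ⟨k, hk, ?_⟩
  nlinarith [htelescope n, hu (n + 1), mul_le_mul_of_nonneg_left hsum hD]

theorem two_mul_sq_mul_lt_one {κ μ L s : ℝ} (hκ : 0 < κ) (hμ : 0 < μ) (hL : 0 < L)
    (hs : 0 ≤ s) (hs_lt : s < 1 / (Real.sqrt (2 * μ) * κ * L)) :
    2 * κ ^ 2 * s ^ 2 * L ^ 2 * μ < 1 := by
  rw [lt_div_iff₀ (by positivity)] at hs_lt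
  calc 2 * κ ^ 2 * s ^ 2 * L ^ 2 * μ = (s * (Real.sqrt (2 * μ) * κ * L)) ^ 2 := by
        rw [mul_pow, mul_pow, mul_pow, Real.sq_sqrt (by positivity)]; ring
    _ < 1 := pow_lt_one₀ (by positivity) hs_lt two_ne_zero

theorem tseng_rate_estimate_general
    {E : Type*} [NormedAddCommGroup E] [NormedSpace ℝ E]
    (J : E → StrongDual ℝ E) (Jinv : StrongDual ℝ E → E)
    (hJ : ∀ u, J u u = ‖u‖ ^ 2) (hJnorm : ∀ u, ‖J u‖ = ‖u‖)
    (hJinv : ∀ f, J (Jinv f) = f)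
    (φ : E → E → ℝ) (hφ : ∀ u v, φ u v = ‖u‖ ^ 2 - 2 * J v u + ‖v‖ ^ 2)
    (κ μ L : ℝ) (hκ : 0 < κ) (hμ : 1 ≤ μ) (hL : 0 < L)
    (hsmooth : ∀ (u : E) (g : StrongDual ℝ E),
      ‖J u + g‖ ^ 2 ≤ ‖J u‖ ^ 2 + 2 * g u + 2 * κ ^ 2 * ‖g‖ ^ 2)
    (hconv : ∀ u v : E, (1 / μ) * ‖u - v‖ ^ 2 ≤ φ u v)
    (A : E → StrongDual ℝ E) (B : E → Set (StrongDual ℝ E))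
    (hAmono : ∀ u v, 0 ≤ (A u - A v) (u - v))
    (hALip : ∀ u v, ‖A u - A v‖ ≤ L * ‖u - v‖)
    (hBmono : ∀ u v, ∀ us ∈ B u, ∀ vs ∈ B v, 0 ≤ (us - vs) (u - v))
    (a b : ℝ) (lam : ℕ → ℝ)
    (ha : 0 < a) (hb : b < 1 / (Real.sqrt (2 * μ) * κ * L))
    (hlam : ∀ n, a ≤ lam n ∧ lam n ≤ b)
    (x y : ℕ → E)
    (hy : ∀ n, ∃ bn ∈ B (y n), J (x n) - lam n • A (x n) = J (y n) + lam n • bn)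
    (hx : ∀ n, x (n + 1) = Jinv (J (y n) - lam n • (A (y n) - A (x n))))
    (xs : E) (hxs : ∃ bs ∈ B xs, A xs + bs = 0) :
    ∀ n : ℕ, 1 ≤ n → ∃ k, 1 ≤ k ∧ k ≤ n ∧
      ‖x k - y k‖ ^ 2 ≤ μ * φ xs (x 1) / ((n : ℝ) * (1 - 2 * κ ^ 2 * b ^ 2 * L ^ 2 * μ)) := by
  intro n hn
  obtain ⟨bs, hbs, hzero⟩ := hxs
  obtain rfl : φ = lyapunov J := funext₂ hφ
  have hμ0 : 0 < μ := by linarith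
  have hlam0 : ∀ m, 0 ≤ lam m := fun m => (ha.trans_le (hlam m).1).le
  have hgap : 0 < 1 - 2 * κ ^ 2 * b ^ 2 * L ^ 2 * μ :=
    sub_pos.mpr (two_mul_sq_mul_lt_one hκ hμ0 hL ((hlam0 0).trans (hlam 0).2) hb)
  have hD : 0 ≤ 1 / μ - 2 * κ ^ 2 * b ^ 2 * L ^ 2 := by
    rw [show 1 / μ - 2 * κ ^ 2 * b ^ 2 * L ^ 2 = (1 - 2 * κ ^ 2 * b ^ 2 * L ^ 2 * μ) / μ by
      field_simp]
    positivity
  have hdescent : ∀ m, lyapunov J xs (x (m + 1))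
      + (1 / μ - 2 * κ ^ 2 * b ^ 2 * L ^ 2) * ‖x m - y m‖ ^ 2 ≤ lyapunov J xs (x m) := by
    intro m
    obtain ⟨bm, hbm, hres⟩ := hy m
    exact tseng_lyapunov_descent hJ hJnorm hsmooth hconv hAmono hALip hBmono (hlam0 m)
      (hlam m).2 hbm hres (by rw [hx m, hJinv]) hbs hzero
  obtain ⟨k, hk, hk_le⟩ := exists_mem_Icc_mul_le_of_descent
    (u := fun m => lyapunov J xs (x m)) hD (fun m => lyapunov_nonneg hμ0 hconv xs (x m)) hdescent hn
  obtain ⟨hk1, hkn⟩ := Finset.mem_Icc.mp hk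
  refine ⟨k, hk1, hkn, ?_⟩
  rw [le_div_iff₀ (by positivity)]
  calc ‖x k - y k‖ ^ 2 * (n * (1 - 2 * κ ^ 2 * b ^ 2 * L ^ 2 * μ))
      = μ * (n * (1 / μ - 2 * κ ^ 2 * b ^ 2 * L ^ 2) * ‖x k - y k‖ ^ 2) := by
        field_simp
    _ ≤ μ * lyapunov J xs (x 1) := mul_le_mul_of_nonneg_left hk_le hμ0.le

/-- Rate of convergence of Tseng's algorithm with step sizes
`0 < a ≤ λ_n ≤ b < 1/(√(2μ) κ L)`:
`min_{1≤k≤n} ‖x_k − y_k‖² ≤ μ φ(x*, x₁) / (n (1 − 2κ²b²L²μ))`. -/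
theorem tseng_rate_estimate
    {E : Type*} [NormedAddCommGroup E] [NormedSpace ℝ E] [CompleteSpace E]
    (J : E → StrongDual ℝ E) (Jinv : StrongDual ℝ E → E)
    (hJ : ∀ u, J u u = ‖u‖ ^ 2) (hJnorm : ∀ u, ‖J u‖ = ‖u‖)
    (hJinv : ∀ f, J (Jinv f) = f) (hinvJ : ∀ u, Jinv (J u) = u)
    (φ : E → E → ℝ) (hφ : ∀ u v, φ u v = ‖u‖ ^ 2 - 2 * J v u + ‖v‖ ^ 2)
    (κ μ L : ℝ) (hκ : 0 < κ) (hμ : 1 ≤ μ) (hL : 0 < L)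
    (hsmooth : ∀ (u : E) (g : StrongDual ℝ E),
      ‖J u + g‖ ^ 2 ≤ ‖J u‖ ^ 2 + 2 * g u + 2 * κ ^ 2 * ‖g‖ ^ 2)
    (hconv : ∀ u v : E, (1 / μ) * ‖u - v‖ ^ 2 ≤ φ u v)
    (A : E → StrongDual ℝ E) (B : E → Set (StrongDual ℝ E))
    (hAmono : ∀ u v, 0 ≤ (A u - A v) (u - v))
    (hALip : ∀ u v, ‖A u - A v‖ ≤ L * ‖u - v‖)
    (hBmono : ∀ u v, ∀ us ∈ B u, ∀ vs ∈ B v, 0 ≤ (us - vs) (u - v))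
    (a b : ℝ) (lam : ℕ → ℝ)
    (ha : 0 < a) (hb : b < 1 / (Real.sqrt (2 * μ) * κ * L))
    (hlam : ∀ n, a ≤ lam n ∧ lam n ≤ b)
    (x y : ℕ → E)
    (hy : ∀ n, ∃ bn ∈ B (y n), J (x n) - lam n • A (x n) = J (y n) + lam n • bn)
    (hx : ∀ n, x (n + 1) = Jinv (J (y n) - lam n • (A (y n) - A (x n))))
    (xs : E) (hxs : ∃ bs ∈ B xs, A xs + bs = 0) :
    ∀ n : ℕ, 1 ≤ n → ∃ k, 1 ≤ k ∧ k ≤ n ∧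
      ‖x k - y k‖ ^ 2 ≤ μ * φ xs (x 1) / ((n : ℝ) * (1 - 2 * κ ^ 2 * b ^ 2 * L ^ 2 * μ)) :=
  tseng_rate_estimate_general J Jinv hJ hJnorm hJinv φ hφ κ μ L hκ hμ hL hsmooth hconv A B hAmono
    hALip hBmono a b lam ha hb hlam x y hy hx xs hxs
end

section
/- In the Armijo-type line search of Algorithm 3.8, the step-size λ_n chosen as the largest λ ∈ {γ, γl, γl², …} satisfying λ‖Ax_n − A(J_λ^B J⁻¹(Jx_n − λAx_n))‖ ≤ θ‖x_n − J_λ^B J⁻¹(Jx_n − λAx_n)‖ is well-defined and satisfies min{γ, θl/L} ≤ λ_n ≤ γ. -/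
/-!
For `λ ≤ θ / L` the Lipschitz bound gives `λ‖Ax − Ay‖ ≤ λL‖x − y‖ ≤ θ‖x − y‖`, so the Armijo test
is passed by every trial step below `θ / L`. Since `γ lᵏ → 0`, some trial step passes, and the
first one that does is the largest. If it is not `γ` itself, its predecessor `γ lᵏ⁻¹` failed,
hence exceeds `θ / L`, and the accepted step exceeds `θ l / L`.
-/

lemma mul_norm_sub_le_of_lipschitz {E F : Type*} [SeminormedAddCommGroup E]
    [SeminormedAddCommGroup F] {A : E → F} {L θ t : ℝ} (hL : 0 < L)
    (hALip : ∀ u v, ‖A u - A v‖ ≤ L * ‖u - v‖) (ht₀ : 0 ≤ t) (ht : t ≤ θ / L) (x y : E) :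
    t * ‖A x - A y‖ ≤ θ * ‖x - y‖ :=
  calc t * ‖A x - A y‖ ≤ θ / L * (L * ‖x - y‖) :=
        mul_le_mul ht (hALip x y) (norm_nonneg _) (ht₀.trans ht)
    _ = θ * ‖x - y‖ := by field_simp

section Backtracking

variable {γ l c : ℝ} {P : ℝ → Prop}

lemma exists_mul_pow_le (hγ : 0 < γ) (hl1 : l < 1) (hc : 0 < c) :
    ∃ k : ℕ, γ * l ^ k ≤ c := by
  obtain ⟨k, hk⟩ := exists_pow_lt_of_lt_one (div_pos hc hγ) hl1
  exact ⟨k, by rw [lt_div_iff₀' hγ] at hk; exact hk.le⟩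

lemma min_le_mul_pow_of_forall_lt_not (hγ : 0 < γ) (hl0 : 0 < l)
    (hP : ∀ t, 0 ≤ t → t ≤ c → P t) {k : ℕ} (hk : ∀ m < k, ¬ P (γ * l ^ m)) :
    min γ (c * l) ≤ γ * l ^ k := by
  cases k with
  | zero => simp
  | succ m =>
    have hfail : c < γ * l ^ m :=
      not_le.mp fun h ↦ hk m m.lt_succ_self (hP _ (by positivity) h)
    calc min γ (c * l) ≤ c * l := min_le_right _ _
      _ ≤ γ * l ^ (m + 1) := by
        rw [pow_succ, ← mul_assoc]
        exact mul_le_mul_of_nonneg_right hfail.le hl0.le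

lemma exists_greatest_mul_pow_of_forall_le (hγ : 0 < γ) (hl0 : 0 < l) (hl1 : l < 1)
    (hc : 0 < c) (hP : ∀ t, 0 ≤ t → t ≤ c → P t) :
    ∃ s : ℝ, (∃ k : ℕ, s = γ * l ^ k) ∧ P s ∧ (∀ k : ℕ, P (γ * l ^ k) → γ * l ^ k ≤ s) ∧
      min γ (c * l) ≤ s ∧ s ≤ γ := by
  classical
  have hex : ∃ k, P (γ * l ^ k) := by
    obtain ⟨k, hk⟩ := exists_mul_pow_le hγ hl1 hc
    exact ⟨k, hP _ (by positivity) hk⟩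
  have hanti : Antitone fun k : ℕ ↦ γ * l ^ k := fun _ _ hmn ↦
    mul_le_mul_of_nonneg_left (pow_le_pow_of_le_one hl0.le hl1.le hmn) hγ.le
  refine ⟨γ * l ^ Nat.find hex, ⟨_, rfl⟩, Nat.find_spec hex,
    fun k hk ↦ hanti (Nat.find_min' hex hk),
    min_le_mul_pow_of_forall_lt_not hγ hl0 hP fun m hm ↦ Nat.find_min hex hm, ?_⟩
  simpa using hanti (Nat.zero_le (Nat.find hex))

end Backtracking

theorem linesearch_well_defined_general
    {E : Type*} [NormedAddCommGroup E] [NormedSpace ℝ E]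
    (A : E → StrongDual ℝ E) (L : ℝ) (hL : 0 < L)
    (hALip : ∀ u v, ‖A u - A v‖ ≤ L * ‖u - v‖)
    (γ l θ : ℝ) (hγ : 0 < γ) (hl0 : 0 < l) (hl1 : l < 1) (hθ : 0 < θ)
    (x : E) (T : ℝ → E) :
    ∃ lamn : ℝ, (∃ k : ℕ, lamn = γ * l ^ k) ∧
      lamn * ‖A x - A (T lamn)‖ ≤ θ * ‖x - T lamn‖ ∧
      (∀ k : ℕ, γ * l ^ k * ‖A x - A (T (γ * l ^ k))‖ ≤ θ * ‖x - T (γ * l ^ k)‖ →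
        γ * l ^ k ≤ lamn) ∧
      min γ (θ * l / L) ≤ lamn ∧ lamn ≤ γ := by
  rw [mul_div_right_comm]
  exact exists_greatest_mul_pow_of_forall_le (P := fun t ↦ t * ‖A x - A (T t)‖ ≤ θ * ‖x - T t‖)
    hγ hl0 hl1 (div_pos hθ hL)
    fun t ht₀ ht ↦ mul_norm_sub_le_of_lipschitz hL hALip ht₀ ht x (T t)

/-- The Armijo-type line search is well defined: the largest
`λ ∈ {γ, γl, γl², …}` satisfying
`λ‖Ax − A(J_λ^B J⁻¹(Jx − λAx))‖ ≤ θ‖x − J_λ^B J⁻¹(Jx − λAx)‖` exists and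
satisfies `min{γ, θl/L} ≤ λ_n ≤ γ`.  Here `T λ` denotes `J_λ^B (J⁻¹ (Jx − λAx))`. -/
theorem linesearch_well_defined
    {E : Type*} [NormedAddCommGroup E] [NormedSpace ℝ E] [CompleteSpace E]
    (A : E → StrongDual ℝ E) (L : ℝ) (hL : 0 < L)
    (hALip : ∀ u v, ‖A u - A v‖ ≤ L * ‖u - v‖)
    (γ l θ : ℝ) (hγ : 0 < γ) (hl0 : 0 < l) (hl1 : l < 1) (hθ : 0 < θ)
    (x : E) (T : ℝ → E) :
    ∃ lamn : ℝ, (∃ k : ℕ, lamn = γ * l ^ k) ∧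
      lamn * ‖A x - A (T lamn)‖ ≤ θ * ‖x - T lamn‖ ∧
      (∀ k : ℕ, γ * l ^ k * ‖A x - A (T (γ * l ^ k))‖ ≤ θ * ‖x - T (γ * l ^ k)‖ →
        γ * l ^ k ≤ lamn) ∧
      min γ (θ * l / L) ≤ lamn ∧ lamn ≤ γ :=
  linesearch_well_defined_general A L hL hALip γ l θ hγ hl0 hl1 hθ x T
end

section
/- Let B = ∂f be the subdifferential of a proper convex lower semicontinuous function f : E → ℝ ∪ {+∞} on a reflexive, strictly convex, smooth Banach space E. Then for r > 0 and z ∈ E, the resolvent J_r^{∂f}(z) = (J + r∂f)⁻¹(Jz) equals argmin_{y ∈ E} { f(y) + (1/(2r))‖y‖² − (1/r)⟨y, Jz⟩ }. -/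
/-! With `s = (Jz - Jxr) / r`, the subgradient inequality at `xr` reduces the comparison of the
objective at `v` and at `xr` to the sign of `‖v‖² + ‖xr‖² - 2⟨v, Jxr⟩`, which dominates
`(‖v‖ - ‖xr‖)²` because `‖Jxr‖ = ‖xr‖`. If it vanishes, then `‖v‖ = ‖xr‖` and `Jxr` attains its
norm at `v + xr`, so `‖v + xr‖ = ‖v‖ + ‖xr‖` and strict convexity gives `v = xr`. -/

section Duality

variable {E : Type*}

lemma sq_norm_sub_norm_le_of_opNorm_le [SeminormedAddCommGroup E] [NormedSpace ℝ E]
    {x : StrongDual ℝ E} {u : E} (hx : ‖x‖ ≤ ‖u‖) (v : E) :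
    (‖v‖ - ‖u‖) ^ 2 ≤ ‖v‖ ^ 2 + ‖u‖ ^ 2 - 2 * x v := by
  have hxv : x v ≤ ‖u‖ * ‖v‖ :=
    (le_abs_self _).trans <| (x.le_opNorm v).trans <| by gcongr
  nlinarith

lemma eq_of_norm_sq_add_norm_sq_sub_le_zero [NormedAddCommGroup E] [NormedSpace ℝ E]
    [StrictConvexSpace ℝ E] {x : StrongDual ℝ E} {u v : E} (hx : ‖x‖ ≤ ‖u‖)
    (hxu : x u = ‖u‖ ^ 2) (h : ‖v‖ ^ 2 + ‖u‖ ^ 2 - 2 * x v ≤ 0) : v = u := by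
  have hnorm : ‖v‖ = ‖u‖ := by
    have := sq_norm_sub_norm_le_of_opNorm_le hx v
    nlinarith [sq_nonneg (‖v‖ - ‖u‖)]
  have hadd : ‖u‖ * (‖v‖ + ‖u‖) ≤ ‖u‖ * ‖v + u‖ :=
    calc ‖u‖ * (‖v‖ + ‖u‖) ≤ x (v + u) := by rw [map_add, hxu]; rw [hnorm] at h ⊢; nlinarith
      _ ≤ ‖x‖ * ‖v + u‖ := (le_abs_self _).trans (x.le_opNorm _)
      _ ≤ ‖u‖ * ‖v + u‖ := by gcongr
  refine eq_of_norm_eq_of_norm_add_eq hnorm (le_antisymm (norm_add_le v u) ?_)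
  rcases (norm_nonneg u).eq_or_lt with hu | hu
  · rw [← hu, hnorm, ← hu, add_zero]; exact norm_nonneg _
  · exact le_of_mul_le_mul_left hadd hu

end Duality

section Subgradient

variable {E : Type*} [AddCommGroup E] [TopologicalSpace E] [Module ℝ E]

def IsSubgradient (f : E → EReal) (s : StrongDual ℝ E) (x : E) : Prop :=
  ∀ v, f x + ((s (v - x) : ℝ) : EReal) ≤ f v

variable {f : E → EReal} {s : StrongDual ℝ E} {x : E}

namespace IsSubgradient

lemma ne_top (hs : IsSubgradient f s x) {u : E} (hu : f u ≠ ⊤) : f x ≠ ⊤ := by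
  intro hx
  have := hs u
  rw [hx, EReal.top_add_coe, top_le_iff] at this
  exact hu this

lemma add_le_add {g : E → ℝ} (hs : IsSubgradient f s x) {v : E}
    (hg : g x ≤ g v + s (v - x)) : f x + g x ≤ f v + g v :=
  calc f x + g x ≤ f x + ((s (v - x) : ℝ) : EReal) + g v := by
        rw [add_assoc, ← EReal.coe_add, add_comm (s _)]; gcongr
    _ ≤ f v + g v := by gcongr; exact hs v

lemma le_of_add_le {g : E → ℝ} (hs : IsSubgradient f s x) (htop : f x ≠ ⊤) (hbot : f x ≠ ⊥)
    {w : E} (hw : f w + g w ≤ f x + g x) : g w + s (w - x) ≤ g x := by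
  obtain ⟨a, ha⟩ : ∃ a : ℝ, f x = a := ⟨_, (EReal.coe_toReal htop hbot).symm⟩
  have hsw := hs w
  rw [ha] at hsw hw
  have key : ((a + (s (w - x) + g w) : ℝ) : EReal) ≤ ((a + g x : ℝ) : EReal) :=
    calc ((a + (s (w - x) + g w) : ℝ) : EReal) = a + s (w - x) + g w := by
          push_cast; rw [add_assoc]
      _ ≤ f w + g w := by gcongr
      _ ≤ a + g x := hw
  have := EReal.coe_le_coe_iff.mp key
  linarith

end IsSubgradient

end Subgradient

section Penalty

variable {E : Type*} [SeminormedAddCommGroup E] [NormedSpace ℝ E]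

noncomputable def resolventPenalty (r : ℝ) (φ : StrongDual ℝ E) (v : E) : ℝ :=
  1 / (2 * r) * ‖v‖ ^ 2 - 1 / r * φ v

lemma resolventPenalty_sub_add_apply_eq {r : ℝ} (hr : r ≠ 0) {φ ψ s : StrongDual ℝ E}
    (h : φ = ψ + r • s) {x : E} (hψ : ψ x = ‖x‖ ^ 2) (v : E) :
    resolventPenalty r φ v - resolventPenalty r φ x + s (v - x) =
      (‖v‖ ^ 2 + ‖x‖ ^ 2 - 2 * ψ v) / (2 * r) := by
  have hs : ∀ u, s u = (φ u - ψ u) / r := fun u => by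
    rw [h, add_apply, smul_apply, smul_eq_mul, add_sub_cancel_left, mul_div_cancel_left₀ _ hr]
  simp only [resolventPenalty, hs, map_sub, hψ]
  field_simp
  ring

end Penalty

theorem resolvent_subdifferential_eq_argmin_general
    {E : Type*} [NormedAddCommGroup E] [NormedSpace ℝ E]
    [StrictConvexSpace ℝ E]
    (J : E → StrongDual ℝ E)
    (hJ : ∀ u, J u u = ‖u‖ ^ 2) (hJnorm : ∀ u, ‖J u‖ = ‖u‖)
    (f : E → EReal)
    (hproper : (∃ u, f u ≠ ⊤) ∧ ∀ u, f u ≠ ⊥)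
    (r : ℝ) (hr : 0 < r) (z xr : E)
    -- `xr` is the resolvent point: `Jz ∈ Jxr + r ∂f(xr)`
    (hxr : ∃ s : StrongDual ℝ E, (∀ v, f xr + ((s (v - xr) : ℝ) : EReal) ≤ f v) ∧
      J z = J xr + r • s) :
    (∀ v : E, f xr + (((1 / (2 * r)) * ‖xr‖ ^ 2 - (1 / r) * J z xr : ℝ) : EReal) ≤
        f v + (((1 / (2 * r)) * ‖v‖ ^ 2 - (1 / r) * J z v : ℝ) : EReal)) ∧
    (∀ w : E, (∀ v : E, f w + (((1 / (2 * r)) * ‖w‖ ^ 2 - (1 / r) * J z w : ℝ) : EReal) ≤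
        f v + (((1 / (2 * r)) * ‖v‖ ^ 2 - (1 / r) * J z v : ℝ) : EReal)) → w = xr) := by
  obtain ⟨s, hs, hJz⟩ := hxr
  obtain ⟨⟨u, hu⟩, hbot⟩ := hproper
  have hs : IsSubgradient f s xr := hs
  have hgap := resolventPenalty_sub_add_apply_eq hr.ne' hJz (hJ xr)
  refine ⟨fun v => hs.add_le_add (g := resolventPenalty r (J z)) ?_, fun w hw => ?_⟩
  · have hD := (sq_nonneg _).trans (sq_norm_sub_norm_le_of_opNorm_le (hJnorm xr).le v)
    have := div_nonneg hD (by positivity : (0 : ℝ) ≤ 2 * r)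
    linarith [hgap v]
  · have hgw := hs.le_of_add_le (g := resolventPenalty r (J z)) (hs.ne_top hu) (hbot xr) (hw xr)
    refine eq_of_norm_sq_add_norm_sq_sub_le_zero (hJnorm xr).le (hJ xr) ?_
    have : (‖w‖ ^ 2 + ‖xr‖ ^ 2 - 2 * J xr w) / (2 * r) ≤ 0 := by linarith [hgap w]
    simpa using (div_le_iff₀ (by positivity)).mp this

/-- For a proper convex lower semicontinuous `f : E → ℝ ∪ {+∞}` on a
reflexive, strictly convex, smooth Banach space, the resolvent `J_r^{∂f}(z)`, i.e. the point
`x_r` with `Jz ∈ Jx_r + r ∂f(x_r)`, equals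
`argmin_y { f(y) + (1/(2r))‖y‖² − (1/r)⟨y, Jz⟩ }`. -/
theorem resolvent_subdifferential_eq_argmin
    {E : Type*} [NormedAddCommGroup E] [NormedSpace ℝ E] [CompleteSpace E]
    [StrictConvexSpace ℝ E]
    (J : E → StrongDual ℝ E)
    (hJ : ∀ u, J u u = ‖u‖ ^ 2) (hJnorm : ∀ u, ‖J u‖ = ‖u‖)
    (f : E → EReal)
    (hproper : (∃ u, f u ≠ ⊤) ∧ ∀ u, f u ≠ ⊥)
    (hfconv : ∀ u v : E, ∀ t : ℝ, 0 ≤ t → t ≤ 1 →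
      f (t • u + (1 - t) • v) ≤ (t : EReal) * f u + ((1 - t : ℝ) : EReal) * f v)
    (hflsc : LowerSemicontinuous f)
    (r : ℝ) (hr : 0 < r) (z xr : E)
    -- `xr` is the resolvent point: `Jz ∈ Jxr + r ∂f(xr)`
    (hxr : ∃ s : StrongDual ℝ E, (∀ v, f xr + ((s (v - xr) : ℝ) : EReal) ≤ f v) ∧
      J z = J xr + r • s) :
    (∀ v : E, f xr + (((1 / (2 * r)) * ‖xr‖ ^ 2 - (1 / r) * J z xr : ℝ) : EReal) ≤
        f v + (((1 / (2 * r)) * ‖v‖ ^ 2 - (1 / r) * J z v : ℝ) : EReal)) ∧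
    (∀ w : E, (∀ v : E, f w + (((1 / (2 * r)) * ‖w‖ ^ 2 - (1 / r) * J z w : ℝ) : EReal) ≤
        f v + (((1 / (2 * r)) * ‖v‖ ^ 2 - (1 / r) * J z v : ℝ) : EReal)) → w = xr) :=
  resolvent_subdifferential_eq_argmin_general J hJ hJnorm f hproper r hr z xr hxr
end
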